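/- arXiv:2108.06416 — 2 statements merged into one kernel-verified Lean document; each statement's English description precedes it below -/
import Mathlib

section
/- For each t ≥ 0, the map F_t : ℝ³ → ℝ³ given by F_t(x,y,z) = (−x + e^{−t}(x+y)³, −y + e^{−t}[(x+z)³ − (x+y)³], −z − e^{−t}(x+y)³) is injective; hence the family {F_t} is eventually injective. -/
theorem example2_eventually_injective
    (F : ℝ → (ℝ × ℝ × ℝ) → (ℝ × ℝ × ℝ))
    (hF : ∀ t x y z, F t (x, y, z) =
      (-x + Real.exp (-t) * (x + y)^3,
       -y + Real.exp (-t) * ((x + z)^3 - (x + y)^3),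
       -z - Real.exp (-t) * (x + y)^3)) :
    (∀ t ≥ (0:ℝ), Function.Injective (F t)) ∧
    (∃ τ ≥ (0:ℝ), ∀ t ≥ τ, Function.Injective (F t)) := by
  have hinj : ∀ t : ℝ, Function.Injective (F t) := by
    intro t ⟨a, b, c⟩ ⟨a', b', c'⟩ h
    rw [hF, hF, Prod.mk.injEq, Prod.mk.injEq] at h
    obtain ⟨h1, h2, h3⟩ := h
    set e := Real.exp (-t) with he
    have hac : a + c = a' + c' := by linarith
    rw [mul_sub, mul_sub] at h2
    have h4 : e * (a + c)^3 = e * (a' + c')^3 := by rw [hac]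
    have hab : a + b = a' + b' := by linarith
    have h5 : e * (a + b)^3 = e * (a' + b')^3 := by rw [hab]
    have ha : a = a' := by linarith
    have hb : b = b' := by linarith
    have hc : c = c' := by linarith
    simp [ha, hb, hc]
  exact ⟨fun t _ => hinj t, 0, le_refl 0, fun t _ => hinj t⟩
end

section
/- Let λ < 0 and t ≥ 0. The map M_t : ℝ³ → ℝ³ defined by M_t(x,y,z) = (λx + e^{−t} y³, λy + e^{−t}(x+z)³, λz − e^{−t} y³) is a bijection with explicit inverse N_t(x,y,z) = ((1/λ)(x − e^{−t}[(1/λ)(y − e^{−t}((x+z)/λ)³)]³), (1/λ)(y − e^{−t}((x+z)/λ)³), (1/λ)(z + e^{−t}[(1/λ)(y − e^{−t}((x+z)/λ)³)]³)); that is, M_t ∘ N_t = id and N_t ∘ M_t = id. -/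
theorem example_polynomial_inverse
    (lam t : ℝ) (hlam : lam < 0)
    (M N : (ℝ × ℝ × ℝ) → (ℝ × ℝ × ℝ))
    (hM : ∀ x y z, M (x, y, z) =
      (lam * x + Real.exp (-t) * y ^ 3,
       lam * y + Real.exp (-t) * (x + z) ^ 3,
       lam * z - Real.exp (-t) * y ^ 3))
    (hN : ∀ x y z, N (x, y, z) =
      ((1 / lam) * (x - Real.exp (-t) *
          ((1 / lam) * (y - Real.exp (-t) * ((x + z) / lam) ^ 3)) ^ 3),
       (1 / lam) * (y - Real.exp (-t) * ((x + z) / lam) ^ 3),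
       (1 / lam) * (z + Real.exp (-t) *
          ((1 / lam) * (y - Real.exp (-t) * ((x + z) / lam) ^ 3)) ^ 3))) :
    (∀ p, M (N p) = p) ∧ (∀ p, N (M p) = p) ∧ Function.Bijective M := by
  have hl : lam ≠ 0 := ne_of_lt hlam
  have h1 : ∀ p, M (N p) = p := by
    rintro ⟨x, y, z⟩
    rw [hN, hM]
    refine Prod.ext ?_ (Prod.ext ?_ ?_) <;> simp only [] <;> field_simp <;> ring
  have h2 : ∀ p, N (M p) = p := by
    rintro ⟨x, y, z⟩
    rw [hM, hN]
    refine Prod.ext ?_ (Prod.ext ?_ ?_) <;> simp only [] <;> field_simp <;> ring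
  exact ⟨h1, h2, Function.bijective_iff_has_inverse.mpr ⟨N, h2, h1⟩⟩
end
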